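/- arXiv:math/0702378 — 5 statements merged into one kernel-verified Lean document; each statement's English description precedes it below -/
import Mathlib

section
/- Let f : ℝ → ℝ be twice continuously differentiable with compact support. Let ν be differentiable on ℝ \ {0} with ν′(y) ≥ 0 for y ≠ 0, ν(x) → 0 as x → +∞ and as x → −∞, ∫_{-∞}^{∞} x²/(1+x²) ν′(x) dx < ∞, and for every M ∈ (0,∞) assume ∫_{-M}^{M} |ν(x)| dx < ∞ and ∫_{-M}^{M} |x| ν′(x) dx < ∞, and x·ν(x) → 0 as x → 0. Define k(x) = ∫_0^x ν(y) dy. Then for every x ∈ ℝ the function u ↦ ∫_{-∞}^{∞} f′(y) k(y−u) dy is differentiable at x, and its derivative equals ∫_{-∞}^{∞} [f(x+y) − f(x)] ν′(y) dy. -/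
/-!
Translating and integrating by parts against the primitive `k` turns `∫ f'(y) k(y - u) dy` into
`-∫ f(u + z) ν(z) dz`, the convolution of the compactly supported `C¹` function `f` with the
(locally integrable) reflection of `ν`; differentiating the convolution gives
`-∫ f'(x + z) ν(z) dz`. A second integration by parts, against `ν` on each half-line, yields
`∫ (f(x + z) - f(x)) ν'(z) dz`: the boundary term `(f(x + z) - f(x)) ν(z)` vanishes at `z = 0`
because `z ν(z) → 0`, and the integrand is integrable because
`|f(x + z) - f(x)| ≤ C min(|z|, 1)` while `ν'` integrates `min(|z|, 1)`.
-/

open MeasureTheory Real Filter Set Topology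
open scoped Convolution

theorem ContinuousOn.aestronglyMeasurable_of_compl_singleton {X : Type*} [MeasurableSpace X]
    [TopologicalSpace X] [OpensMeasurableSpace X] [T1Space X] {μ : Measure X}
    [NullSingletonClass μ] {f : X → ℝ} {a : X} (hf : ContinuousOn f {a}ᶜ) :
    AEStronglyMeasurable f μ := by
  simpa [restrict_compl_singleton] using
    hf.aestronglyMeasurable (μ := μ) (measurableSet_singleton a).compl

theorem aestronglyMeasurable_of_hasDerivAt_ne {μ : Measure ℝ} [NullSingletonClass μ]
    {f f' : ℝ → ℝ} {a : ℝ} (hf : ∀ x ≠ a, HasDerivAt f (f' x) x) :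
    AEStronglyMeasurable f' μ :=
  (measurable_deriv f).aestronglyMeasurable.congr <| by
    filter_upwards [Measure.ae_ne μ a] with x hx
    exact (hf x hx).deriv

theorem locallyIntegrable_of_integrableOn_Icc {f : ℝ → ℝ} (hm : AEStronglyMeasurable f)
    (h : ∀ M, 0 < M → IntegrableOn (fun x => |f x|) (Icc (-M) M)) : LocallyIntegrable f := by
  intro x
  refine ⟨Icc (-(|x| + 1)) (|x| + 1), Icc_mem_nhds ?_ ?_, ?_⟩
  · linarith [neg_abs_le x]
  · linarith [le_abs_self x]
  · exact (integrable_norm_iff hm.restrict).1 (h _ (by positivity))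

theorem MeasureTheory.LocallyIntegrable.intervalIntegrable {f : ℝ → ℝ}
    (hf : LocallyIntegrable f) (a b : ℝ) : IntervalIntegrable f volume a b :=
  (hf.integrableOn_isCompact isCompact_uIcc).intervalIntegrable

theorem MeasureTheory.LocallyIntegrable.comp_neg {f : ℝ → ℝ} (hf : LocallyIntegrable f) :
    LocallyIntegrable fun x => f (-x) :=
  (locallyIntegrable_map_homeomorph (Homeomorph.neg ℝ)).1
    (by rwa [Homeomorph.coe_neg, Measure.map_neg_eq_self])

theorem HasDerivAt.tendsto_sub_mul_nhdsNE {f g : ℝ → ℝ} {x f' : ℝ} (hf : HasDerivAt f f' x)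
    (hg : Tendsto (fun z => z * g z) (𝓝[≠] 0) (𝓝 0)) :
    Tendsto (fun z => (f (x + z) - f x) * g z) (𝓝[≠] 0) (𝓝 0) := by
  have hprod := (hasDerivAt_iff_tendsto_slope_zero.1 hf).mul hg
  rw [mul_zero] at hprod
  refine hprod.congr' ?_
  filter_upwards [self_mem_nhdsWithin] with z (hz : z ≠ 0)
  rw [smul_eq_mul]
  field_simp

theorem integrable_mul_of_abs_le_of_abs_le_mul {g ν' : ℝ → ℝ} {C : ℝ}
    (hg : AEStronglyMeasurable g) (hν'm : AEStronglyMeasurable ν')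
    (hν'pos : ∀ᵐ z, 0 ≤ ν' z)
    (hint : Integrable (fun z => z ^ 2 / (1 + z ^ 2) * ν' z))
    (hloc : IntegrableOn (fun z => |z| * ν' z) (Icc (-1) 1))
    (hg_zero : ∀ z, |g z| ≤ C * |z|) (hg_bdd : ∀ z, |g z| ≤ C) :
    Integrable (fun z => g z * ν' z) := by
  have hmeas : AEStronglyMeasurable (fun z => g z * ν' z) := hg.mul hν'm
  have h_near : IntegrableOn (fun z => g z * ν' z) (Icc (-1) 1) := by
    refine (hloc.const_mul C).mono' hmeas.restrict ?_
    filter_upwards [ae_restrict_of_ae hν'pos] with z hz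
    rw [norm_mul, Real.norm_eq_abs, Real.norm_eq_abs, abs_of_nonneg hz, ← mul_assoc]
    exact mul_le_mul_of_nonneg_right (hg_zero z) hz
  have h_far : IntegrableOn (fun z => g z * ν' z) (Icc (-1) 1)ᶜ := by
    refine (hint.const_mul (2 * C)).integrableOn.mono' hmeas.restrict ?_
    filter_upwards [ae_restrict_of_ae hν'pos, ae_restrict_mem measurableSet_Icc.compl]
      with z hz hz1
    have hz2 : 1 ≤ z ^ 2 := by
      rw [one_le_sq_iff_one_le_abs]
      by_contra! h
      exact hz1 (abs_le.1 h.le)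
    have hq : 1 / 2 ≤ z ^ 2 / (1 + z ^ 2) := by
      rw [div_le_div_iff₀ two_pos (by positivity)]
      linarith
    rw [norm_mul, Real.norm_eq_abs, Real.norm_eq_abs, abs_of_nonneg hz]
    calc |g z| * ν' z ≤ C * ν' z := mul_le_mul_of_nonneg_right (hg_bdd z) hz
      _ ≤ 2 * C * (z ^ 2 / (1 + z ^ 2) * ν' z) := by
        have hC : 0 ≤ C := (abs_nonneg _).trans (hg_bdd z)
        nlinarith [mul_le_mul_of_nonneg_right hq (mul_nonneg hC hz)]
  simpa using h_near.union h_far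

theorem HasCompactSupport.integrable_sub_mul {f ν' : ℝ → ℝ} (hf : ContDiff ℝ 1 f)
    (hfc : HasCompactSupport f) (hν'm : AEStronglyMeasurable ν') (hν'pos : ∀ᵐ z, 0 ≤ ν' z)
    (hint : Integrable (fun z => z ^ 2 / (1 + z ^ 2) * ν' z))
    (hloc : IntegrableOn (fun z => |z| * ν' z) (Icc (-1) 1)) (x : ℝ) :
    Integrable (fun z => (f (x + z) - f x) * ν' z) := by
  obtain ⟨K, hK⟩ := hf.lipschitzWith_of_hasCompactSupport hfc one_ne_zero
  obtain ⟨B, hB⟩ := hfc.exists_bound_of_continuous hf.continuous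
  refine integrable_mul_of_abs_le_of_abs_le_mul (C := max (K : ℝ) (2 * B))
    ((hf.continuous.comp (continuous_const_add x)).sub continuous_const).aestronglyMeasurable
    hν'm hν'pos hint hloc (fun z => ?_) (fun z => ?_)
  · have := hK.dist_le_mul (x + z) x
    rw [Real.dist_eq, Real.dist_eq, add_sub_cancel_left] at this
    exact this.trans (mul_le_mul_of_nonneg_right (le_max_left _ _) (abs_nonneg z))
  · calc |f (x + z) - f x| ≤ |f (x + z)| + |f x| := abs_sub _ _
      _ ≤ 2 * B := by
        linarith [hB (x + z), hB x, Real.norm_eq_abs (f x), Real.norm_eq_abs (f (x + z))]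
      _ ≤ max (K : ℝ) (2 * B) := le_max_right _ _

theorem integral_mul_deriv_eq_neg_deriv_mul_of_tendsto_nhdsNE {u u' v v' : ℝ → ℝ} {a c : ℝ}
    (hu : ∀ x ≠ a, HasDerivAt u (u' x) x) (hv : ∀ x ≠ a, HasDerivAt v (v' x) x)
    (huv' : Integrable (fun x => u x * v' x)) (hu'v : Integrable (fun x => u' x * v x))
    (h_a : Tendsto (fun x => u x * v x) (𝓝[≠] a) (𝓝 c))
    (h_bot : Tendsto (fun x => u x * v x) atBot (𝓝 0))
    (h_top : Tendsto (fun x => u x * v x) atTop (𝓝 0)) :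
    ∫ x, u x * v' x = -∫ x, u' x * v x := by
  have hsum : Integrable (fun x => u' x * v x + u x * v' x) := hu'v.add huv'
  have hIic := integral_Iic_deriv_mul_eq_sub (fun x hx => hu x hx.ne) (fun x hx => hv x hx.ne)
    hsum.integrableOn (h_a.mono_left (nhdsWithin_mono _ fun x hx => ne_of_lt hx)) h_bot
  have hIoi := integral_Ioi_deriv_mul_eq_sub (fun x hx => hu x hx.ne') (fun x hx => hv x hx.ne')
    hsum.integrableOn (h_a.mono_left (nhdsWithin_mono _ fun x hx => ne_of_gt hx)) h_top
  have htotal : ∫ x, u' x * v x + u x * v' x = 0 := by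
    rw [← intervalIntegral.integral_Iic_add_Ioi hsum.integrableOn hsum.integrableOn, hIic, hIoi]
    ring
  rw [integral_add hu'v huv'] at htotal
  linarith

theorem integral_deriv_mul_eq_neg_integral_mul_of_continuous {a k ν : ℝ → ℝ}
    (ha : ContDiff ℝ 1 a) (hac : HasCompactSupport a) (hν : LocallyIntegrable ν)
    (hk : Continuous k) (hk' : ∀ z ≠ 0, HasDerivAt k (ν z) z) :
    ∫ z, deriv a z * k z = -∫ z, a z * ν z := by
  have h_infty : Tendsto (a * k) (Filter.cocompact ℝ) (𝓝 0) := hac.mul_right.is_zero_at_infty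
  rw [integral_mul_deriv_eq_neg_deriv_mul_of_tendsto_nhdsNE
    (fun z _ => (ha.differentiable one_ne_zero z).hasDerivAt) hk'
    (by simpa using hν.integrable_smul_left_of_hasCompactSupport ha.continuous hac)
    ((ha.continuous_deriv le_rfl).mul hk |>.integrable_of_hasCompactSupport hac.deriv.mul_right)
    ((ha.continuous.mul hk).tendsto 0 |>.mono_left nhdsWithin_le_nhds)
    (h_infty.mono_left atBot_le_cocompact) (h_infty.mono_left atTop_le_cocompact), neg_neg]

theorem integral_deriv_mul_eq_neg_integral_sub_mul {a ν ν' : ℝ → ℝ}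
    (ha : ContDiff ℝ 1 a) (hac : HasCompactSupport a) (hν : ∀ z ≠ 0, HasDerivAt ν (ν' z) z)
    (hνli : LocallyIntegrable ν) (hνbot : Tendsto ν atBot (𝓝 0))
    (hνtop : Tendsto ν atTop (𝓝 0)) (hν0 : Tendsto (fun z => z * ν z) (𝓝[≠] 0) (𝓝 0))
    (hI : Integrable (fun z => (a z - a 0) * ν' z)) :
    ∫ z, deriv a z * ν z = -∫ z, (a z - a 0) * ν' z := by
  have ha' : ∀ z, HasDerivAt a (deriv a z) z := fun z =>
    (ha.differentiable one_ne_zero z).hasDerivAt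
  have h_infty : Tendsto (fun z => a z - a 0) (Filter.cocompact ℝ) (𝓝 (0 - a 0)) :=
    hac.is_zero_at_infty.sub_const _
  rw [integral_mul_deriv_eq_neg_deriv_mul_of_tendsto_nhdsNE (u := fun z => a z - a 0)
    (fun z _ => (ha' z).sub_const _) hν hI
    (by simpa using
      hνli.integrable_smul_left_of_hasCompactSupport (ha.continuous_deriv le_rfl) hac.deriv)
    (by simpa using (ha' 0).tendsto_sub_mul_nhdsNE hν0)
    (by simpa using (h_infty.mono_left atBot_le_cocompact).mul hνbot)
    (by simpa using (h_infty.mono_left atTop_le_cocompact).mul hνtop), neg_neg]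

theorem HasCompactSupport.hasDerivAt_integral_comp_add_mul {f ν : ℝ → ℝ}
    (hf : ContDiff ℝ 1 f) (hfc : HasCompactSupport f) (hν : LocallyIntegrable ν) (x : ℝ) :
    HasDerivAt (fun u => ∫ z, f (u + z) * ν z) (∫ z, deriv f (x + z) * ν z) x := by
  have hconv : ∀ g : ℝ → ℝ,
      (fun t => ν (-t)) ⋆[ContinuousLinearMap.mul ℝ ℝ] g =
        fun u => ∫ z, g (u + z) * ν z := by
    intro g
    ext u
    rw [convolution_def, ← integral_neg_eq_self]
    simp only [neg_neg, sub_neg_eq_add, ContinuousLinearMap.mul_apply', mul_comm]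
  simpa only [hconv] using
    hfc.hasDerivAt_convolution_right (ContinuousLinearMap.mul ℝ ℝ) hν.comp_neg hf x

/-- Lemma 2.1 of the paper: convolution-type representation of the jump part
of a Lévy generator (case 0 < α < 1). -/
theorem stmt0
    (f ν ν' : ℝ → ℝ)
    (hf : ContDiff ℝ 2 f) (hfc : HasCompactSupport f)
    (hν : ∀ y : ℝ, y ≠ 0 → HasDerivAt ν (ν' y) y)
    (hν'pos : ∀ y : ℝ, y ≠ 0 → 0 ≤ ν' y)
    (hνtop : Tendsto ν atTop (nhds 0))
    (hνbot : Tendsto ν atBot (nhds 0))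
    (hint : Integrable (fun x => x ^ 2 / (1 + x ^ 2) * ν' x))
    (hνloc : ∀ M : ℝ, 0 < M → IntegrableOn (fun x => |ν x|) (Set.Icc (-M) M))
    (hν'loc : ∀ M : ℝ, 0 < M → IntegrableOn (fun x => |x| * ν' x) (Set.Icc (-M) M))
    (hx0 : Tendsto (fun x => x * ν x) (nhdsWithin 0 {(0:ℝ)}ᶜ) (nhds 0))
    (k : ℝ → ℝ) (hk : ∀ x : ℝ, k x = ∫ y in (0:ℝ)..x, ν y) :
    ∀ x : ℝ, HasDerivAt (fun u => ∫ y : ℝ, deriv f y * k (y - u))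
      (∫ y : ℝ, (f (x + y) - f x) * ν' y) x := by
  intro x
  have hf1 : ContDiff ℝ 1 f := hf.of_le (by norm_num)
  have hνm : AEStronglyMeasurable ν := ContinuousOn.aestronglyMeasurable_of_compl_singleton
    (a := 0) fun y hy => (hν y hy).continuousAt.continuousWithinAt
  have hνli : LocallyIntegrable ν := locallyIntegrable_of_integrableOn_Icc hνm hνloc
  have hk' : ∀ z ≠ 0, HasDerivAt k (ν z) z := fun z hz => by
    rw [funext hk]
    exact intervalIntegral.integral_hasDerivAt_right (hνli.intervalIntegrable 0 z)
      hνm.stronglyMeasurableAtFilter (hν z hz).continuousAt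
  have hkc : Continuous k := by
    rw [funext hk]
    exact intervalIntegral.continuous_primitive hνli.intervalIntegrable 0
  have hF : ∀ u, ∫ y, deriv f y * k (y - u) = -∫ z, f (u + z) * ν z := fun u => by
    rw [← integral_add_left_eq_self _ u]
    simp only [add_sub_cancel_left]
    have := integral_deriv_mul_eq_neg_integral_mul_of_continuous (a := fun z => f (u + z))
      (hf1.comp (contDiff_const.add contDiff_id)) (hfc.comp_homeomorph (Homeomorph.addLeft u))
      hνli hkc hk'
    simpa only [deriv_comp_const_add] using this
  have hval : ∫ y, (f (x + y) - f x) * ν' y = -∫ z, deriv f (x + z) * ν z := by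
    have hI := hfc.integrable_sub_mul hf1 (aestronglyMeasurable_of_hasDerivAt_ne hν)
      ((Measure.ae_ne volume 0).mono hν'pos) hint (hν'loc 1 one_pos) x
    have := integral_deriv_mul_eq_neg_integral_sub_mul (a := fun z => f (x + z))
      (hf1.comp (contDiff_const.add contDiff_id)) (hfc.comp_homeomorph (Homeomorph.addLeft x))
      hν hνli hνbot hνtop hx0 (by simpa using hI)
    simp only [deriv_comp_const_add, add_zero] at this
    rw [this, neg_neg]
  rw [funext hF, hval]
  exact (hfc.hasDerivAt_integral_comp_add_mul hf1 hνli x).neg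
end

section
/- Let p : ℝ \ {0} → [0,∞) be measurable with ∫_{-∞}^{∞} y²/(1+y²) p(y) dy < ∞, ∫_x^{∞} y p(y) dy < ∞ for every x > 0, and ∫_{-∞}^{-x} |y| p(y) dy < ∞ for every x > 0. Define k(x) = ∫_x^{∞} (y−x) p(y) dy for x > 0 and k(x) = ∫_{-∞}^{x} (x−y) p(y) dy for x < 0, and assume k ∈ L¹(ℝ). Then for every real x ≠ 0: ∫_{-∞}^{∞} k(t) cos(xt) dt = ∫_{-∞}^{∞} p(t) (1 − cos(xt)) / x² dt, both integrals being finite; moreover, if p > 0 on a set of positive Lebesgue measure, then ∫_{-∞}^{∞} k(t) cos(xt) dt > 0. -/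
/-!
On `(0, ∞)` write `k t = ∫_{y > t} (y - t) p y`. The integrand `(y - t) p(y) cos(xt)` on the
triangle `0 < t < y` is absolutely integrable because its `y`-sections integrate to
`k t cos(xt)` with `|k t cos(xt)| ≤ k t` and `k ∈ L¹`; Fubini then turns `∫_{t > 0} k t cos(xt)`
into `∫_{y > 0} p y ∫_0^y (y - t) cos(xt) dt = ∫_{y > 0} p y (1 - cos(xy)) / x²`, and also gives
the integrability of the right-hand side. The negative half-line is the same statement for
`p (-·)` and `k (-·)`. The right-hand integrand is nonnegative and vanishes on `{p > 0}` only on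
the countable set where `cos(xy) = 1`, whence positivity.
-/

open MeasureTheory Real Set

theorem integral_sub_mul_cos {c : ℝ} (hc : c ≠ 0) (y : ℝ) :
    ∫ t in (0 : ℝ)..y, (y - t) * cos (c * t) = (1 - cos (c * y)) / c ^ 2 := by
  have hderiv : ∀ t ∈ uIcc (0 : ℝ) y, HasDerivAt
      (fun t => (y - t) * (sin (c * t) / c) - cos (c * t) / c ^ 2) ((y - t) * cos (c * t)) t := by
    intro t _
    have hlin : HasDerivAt (fun t : ℝ => c * t) c t := by
      simpa using (hasDerivAt_id t).const_mul c
    have h : HasDerivAt (fun t => (y - t) * (sin (c * t) / c) - cos (c * t) / c ^ 2)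
        (-1 * (sin (c * t) / c) + (y - t) * (cos (c * t) * c / c) - -sin (c * t) * c / c ^ 2) t :=
      (((hasDerivAt_id' t).const_sub y).mul (((hasDerivAt_sin _).comp t hlin).div_const c)).sub
        (((hasDerivAt_cos _).comp t hlin).div_const (c ^ 2))
    convert h using 1
    field_simp
    ring
  rw [intervalIntegral.integral_eq_sub_of_hasDerivAt hderiv
    (Continuous.intervalIntegrable (by fun_prop) _ _)]
  simp only [sub_self, mul_zero, zero_mul, zero_sub, sub_zero, sin_zero, cos_zero]
  field_simp
  ring

noncomputable def triangleKernel (p g : ℝ → ℝ) : ℝ × ℝ → ℝ :=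
  {q : ℝ × ℝ | q.1 < q.2}.indicator fun q => (q.2 - q.1) * p q.2 * g q.1

namespace triangleKernel

variable {p g : ℝ → ℝ}

theorem measurable (hp : Measurable p) (hg : Measurable g) : Measurable (triangleKernel p g) :=
  (((measurable_snd.sub measurable_fst).mul (hp.comp measurable_snd)).mul
    (hg.comp measurable_fst)).indicator (measurableSet_lt measurable_fst measurable_snd)

theorem apply_eq_indicator_Ioi (t y : ℝ) :
    triangleKernel p g (t, y) = (Ioi t).indicator (fun y => (y - t) * p y * g t) y := by
  simp only [triangleKernel, indicator, mem_ofPred_eq, mem_Ioi]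

theorem apply_eq_indicator_Iio (t y : ℝ) :
    triangleKernel p g (t, y) = (Iio y).indicator (fun t => (y - t) * p y * g t) t := by
  simp only [triangleKernel, indicator, mem_ofPred_eq, mem_Iio]

theorem norm_apply (hp : ∀ y, 0 < y → 0 ≤ p y) {t : ℝ} (ht : 0 ≤ t) (y : ℝ) :
    ‖triangleKernel p g (t, y)‖ = triangleKernel p (fun s => |g s|) (t, y) := by
  simp only [apply_eq_indicator_Ioi, norm_indicator_eq_indicator_norm]
  refine congrFun (indicator_congr fun y (hy : t < y) => ?_) y
  rw [Real.norm_eq_abs, abs_mul, abs_mul, abs_of_pos (sub_pos.2 hy),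
    abs_of_nonneg (hp y (ht.trans_lt hy))]

theorem setIntegral_Ioi_snd {t : ℝ} (ht : 0 ≤ t) :
    ∫ y in Ioi 0, triangleKernel p g (t, y) = (∫ y in Ioi t, (y - t) * p y) * g t := by
  simp only [apply_eq_indicator_Ioi]
  rw [integral_indicator measurableSet_Ioi, Measure.restrict_restrict measurableSet_Ioi,
    Ioi_inter_Ioi, sup_eq_left.2 ht, integral_mul_const]

theorem setIntegral_Ioi_fst {y : ℝ} (hy : 0 ≤ y) :
    ∫ t in Ioi 0, triangleKernel p g (t, y) = p y * ∫ t in (0 : ℝ)..y, (y - t) * g t := by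
  simp only [apply_eq_indicator_Iio, mul_right_comm _ (p y)]
  rw [integral_indicator measurableSet_Iio, Measure.restrict_restrict measurableSet_Iio,
    Iio_inter_Ioi, ← integral_Ioc_eq_integral_Ioo, ← intervalIntegral.integral_of_le hy,
    intervalIntegral.integral_mul_const, mul_comm]

end triangleKernel

section HalfLine

variable {p k g : ℝ → ℝ}

theorem integrableOn_sub_mul_Ioi (hmeas : Measurable p) {t : ℝ} (ht : 0 ≤ t)
    (hp : ∀ y, t < y → 0 ≤ p y) (hint : IntegrableOn (fun y => y * p y) (Ioi t)) :
    IntegrableOn (fun y => (y - t) * p y) (Ioi t) := by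
  refine hint.mono' ((measurable_id.sub_const t).mul hmeas).aestronglyMeasurable ?_
  filter_upwards [ae_restrict_mem measurableSet_Ioi] with y (hy : t < y)
  rw [Real.norm_eq_abs, abs_of_nonneg (mul_nonneg (sub_nonneg.2 hy.le) (hp y hy))]
  exact mul_le_mul_of_nonneg_right (by linarith) (hp y hy)

theorem integrable_triangleKernel (hmeas : Measurable p) (hg : Measurable g) {C : ℝ}
    (hgC : ∀ t, |g t| ≤ C) (hp : ∀ y, 0 < y → 0 ≤ p y)
    (hintp : ∀ t, 0 < t → IntegrableOn (fun y => y * p y) (Ioi t))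
    (hk : IntegrableOn (fun t => ∫ y in Ioi t, (y - t) * p y) (Ioi 0)) :
    Integrable (triangleKernel p g)
      ((volume.restrict (Ioi 0)).prod (volume.restrict (Ioi 0))) := by
  rw [integrable_prod_iff (triangleKernel.measurable hmeas hg).aestronglyMeasurable]
  constructor
  · filter_upwards [ae_restrict_mem measurableSet_Ioi] with t (ht : 0 < t)
    simp only [triangleKernel.apply_eq_indicator_Ioi]
    rw [integrable_indicator_iff measurableSet_Ioi, IntegrableOn,
      Measure.restrict_restrict measurableSet_Ioi, Ioi_inter_Ioi, sup_eq_left.2 ht.le]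
    exact (integrableOn_sub_mul_Ioi hmeas ht.le (fun y hy => hp y (ht.trans hy))
      (hintp t ht)).mul_const _
  · refine (hk.mul_const C).mono' ((triangleKernel.measurable hmeas hg).norm.stronglyMeasurable
      |>.integral_prod_right').aestronglyMeasurable ?_
    filter_upwards [ae_restrict_mem measurableSet_Ioi] with t (ht : 0 < t)
    simp only [triangleKernel.norm_apply hp ht.le]
    rw [triangleKernel.setIntegral_Ioi_snd ht.le]
    have hk_nonneg : 0 ≤ ∫ y in Ioi t, (y - t) * p y :=
      setIntegral_nonneg measurableSet_Ioi fun y (hy : t < y) =>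
        mul_nonneg (sub_nonneg.2 hy.le) (hp y (ht.trans hy))
    rw [Real.norm_eq_abs, abs_of_nonneg (mul_nonneg hk_nonneg (abs_nonneg _))]
    exact mul_le_mul_of_nonneg_left (hgC t) hk_nonneg

theorem integrableOn_and_setIntegral_Ioi_mul_eq (hmeas : Measurable p) (hg : Measurable g)
    {C : ℝ} (hgC : ∀ t, |g t| ≤ C) (hp : ∀ y, 0 < y → 0 ≤ p y)
    (hintp : ∀ t, 0 < t → IntegrableOn (fun y => y * p y) (Ioi t))
    (hk : ∀ t, 0 < t → k t = ∫ y in Ioi t, (y - t) * p y) (hk1 : IntegrableOn k (Ioi 0)) :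
    IntegrableOn (fun y => p y * ∫ t in (0 : ℝ)..y, (y - t) * g t) (Ioi 0) ∧
      ∫ t in Ioi 0, k t * g t = ∫ y in Ioi 0, p y * ∫ t in (0 : ℝ)..y, (y - t) * g t := by
  have hF := integrable_triangleKernel hmeas hg hgC hp hintp
    (hk1.congr_fun hk measurableSet_Ioi)
  constructor
  · refine hF.integral_prod_right.congr ?_
    filter_upwards [ae_restrict_mem measurableSet_Ioi] with y (hy : 0 < y)
    exact triangleKernel.setIntegral_Ioi_fst hy.le
  · calc ∫ t in Ioi 0, k t * g t
        = ∫ t in Ioi 0, ∫ y in Ioi 0, triangleKernel p g (t, y) :=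
          setIntegral_congr_fun measurableSet_Ioi fun t (ht : 0 < t) => by
            rw [triangleKernel.setIntegral_Ioi_snd ht.le, hk t ht]
      _ = ∫ y in Ioi 0, ∫ t in Ioi 0, triangleKernel p g (t, y) := integral_integral_swap hF
      _ = _ := setIntegral_congr_fun measurableSet_Ioi fun y (hy : 0 < y) =>
            triangleKernel.setIntegral_Ioi_fst hy.le

end HalfLine

section CosineTransform

variable {p k : ℝ → ℝ} {c : ℝ}

theorem integrableOn_and_setIntegral_Ioi_mul_cos_eq (hc : c ≠ 0) (hmeas : Measurable p)
    (hp : ∀ y, 0 < y → 0 ≤ p y)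
    (hintp : ∀ t, 0 < t → IntegrableOn (fun y => y * p y) (Ioi t))
    (hk : ∀ t, 0 < t → k t = ∫ y in Ioi t, (y - t) * p y) (hk1 : IntegrableOn k (Ioi 0)) :
    IntegrableOn (fun s => p s * (1 - cos (c * s)) / c ^ 2) (Ioi 0) ∧
      ∫ s in Ioi 0, k s * cos (c * s) = ∫ s in Ioi 0, p s * (1 - cos (c * s)) / c ^ 2 := by
  simpa only [integral_sub_mul_cos hc, mul_div_assoc] using
    integrableOn_and_setIntegral_Ioi_mul_eq (g := fun t => cos (c * t)) hmeas (by fun_prop)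
      (fun t => abs_cos_le_one _) hp hintp hk hk1

theorem integrableOn_and_setIntegral_Iic_mul_cos_eq (hc : c ≠ 0) (hmeas : Measurable p)
    (hp : ∀ y, y < 0 → 0 ≤ p y)
    (hintm : ∀ t, 0 < t → IntegrableOn (fun y => |y| * p y) (Iio (-t)))
    (hk : ∀ t, t < 0 → k t = ∫ y in Iio t, (t - y) * p y) (hk1 : IntegrableOn k (Iio 0)) :
    IntegrableOn (fun s => p s * (1 - cos (c * s)) / c ^ 2) (Iic 0) ∧
      ∫ s in Iic 0, k s * cos (c * s) = ∫ s in Iic 0, p s * (1 - cos (c * s)) / c ^ 2 := by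
  have hintp : ∀ t, 0 < t → IntegrableOn (fun y => y * p (-y)) (Ioi t) := fun t ht => by
    have h := (hintm t ht).comp_neg
    rw [neg_Iio, neg_neg] at h
    exact h.congr_fun (fun y (hy : t < y) => by
      simp only [abs_neg, abs_of_pos (ht.trans hy)]) measurableSet_Ioi
  have hk' : ∀ t, 0 < t → k (-t) = ∫ y in Ioi t, (y - t) * p (-y) := fun t ht => by
    rw [hk (-t) (neg_lt_zero.2 ht), ← integral_Iic_eq_integral_Iio, ← neg_neg t,
      ← integral_comp_neg_Ioi]
    simp only [neg_neg, sub_neg_eq_add, neg_add_eq_sub]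
  have hk1' : IntegrableOn (fun t => k (-t)) (Ioi 0) := by
    simpa using hk1.comp_neg
  obtain ⟨hint, heq⟩ := integrableOn_and_setIntegral_Ioi_mul_cos_eq (p := fun y => p (-y)) hc
    (hmeas.comp measurable_neg) (fun y hy => hp (-y) (neg_neg_of_pos hy)) hintp hk' hk1'
  constructor
  · rw [integrableOn_Iic_iff_integrableOn_Iio]
    simpa using hint.comp_neg
  · calc ∫ s in Iic 0, k s * cos (c * s) = ∫ s in Ioi 0, k (-s) * cos (c * s) := by
          simpa using (integral_comp_neg_Ioi 0 fun s => k s * cos (c * s)).symm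
      _ = ∫ s in Ioi 0, p (-s) * (1 - cos (c * s)) / c ^ 2 := heq
      _ = ∫ s in Iic 0, p s * (1 - cos (c * s)) / c ^ 2 := by
          simpa using integral_comp_neg_Ioi 0 fun s => p s * (1 - cos (c * s)) / c ^ 2

theorem volume_setOf_cos_mul_eq_one (hc : c ≠ 0) : volume {s : ℝ | cos (c * s) = 1} = 0 := by
  refine measure_mono_null (fun s (hs : cos (c * s) = 1) => ?_)
    ((countable_range fun n : ℤ => n * (2 * π) / c).measure_zero _)
  obtain ⟨n, hn⟩ := (cos_eq_one_iff _).1 hs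
  exact ⟨n, by simp only [hn, mul_div_cancel_left₀ _ hc]⟩

theorem integral_mul_one_sub_cos_pos (hc : c ≠ 0) (hp : ∀ y, y ≠ 0 → 0 ≤ p y)
    (hint : Integrable fun s => p s * (1 - cos (c * s)) / c ^ 2)
    (hsupp : 0 < volume {y | 0 < p y}) :
    0 < ∫ s, p s * (1 - cos (c * s)) / c ^ 2 := by
  have hnonneg : 0 ≤ᵐ[volume] fun s => p s * (1 - cos (c * s)) / c ^ 2 := by
    filter_upwards [Measure.ae_ne volume 0] with s hs
    exact div_nonneg (mul_nonneg (hp s hs) (sub_nonneg.2 (cos_le_one _))) (sq_nonneg c)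
  refine (integral_pos_iff_support_of_nonneg_ae hnonneg hint).2 (hsupp.trans_le ?_)
  rw [← measure_sdiff_null (volume_setOf_cos_mul_eq_one hc)]
  refine measure_mono fun s ⟨(hps : 0 < p s), (hcos : cos (c * s) ≠ 1)⟩ => ?_
  exact (div_pos (mul_pos hps (sub_pos.2 ((cos_le_one _).lt_of_ne hcos))) (by positivity)).ne'

end CosineTransform

theorem stmt7_general (p k : ℝ → ℝ) (hmeas : Measurable p)
    (hpos : ∀ y : ℝ, y ≠ 0 → 0 ≤ p y)
    (hintp : ∀ x : ℝ, 0 < x → IntegrableOn (fun y => y * p y) (Set.Ioi x))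
    (hintm : ∀ x : ℝ, 0 < x → IntegrableOn (fun y => |y| * p y) (Set.Iio (-x)))
    (hkp : ∀ x : ℝ, 0 < x → k x = ∫ y in Set.Ioi x, (y - x) * p y)
    (hkm : ∀ x : ℝ, x < 0 → k x = ∫ y in Set.Iio x, (x - y) * p y)
    (hk1 : Integrable k) :
    ∀ x : ℝ, x ≠ 0 →
      (Integrable (fun s => k s * Real.cos (x * s)) ∧
       Integrable (fun s => p s * (1 - Real.cos (x * s)) / x ^ 2) ∧
       (∫ s : ℝ, k s * Real.cos (x * s))
         = ∫ s : ℝ, p s * (1 - Real.cos (x * s)) / x ^ 2) ∧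
      (0 < volume {y : ℝ | 0 < p y} →
        0 < ∫ s : ℝ, k s * Real.cos (x * s)) := by
  intro x hx
  obtain ⟨hint_neg, heq_neg⟩ := integrableOn_and_setIntegral_Iic_mul_cos_eq hx hmeas
    (fun y hy => hpos y hy.ne) hintm hkm hk1.integrableOn
  obtain ⟨hint_pos, heq_pos⟩ := integrableOn_and_setIntegral_Ioi_mul_cos_eq hx hmeas
    (fun y hy => hpos y hy.ne') hintp hkp hk1.integrableOn
  have hint_k : Integrable fun s => k s * cos (x * s) :=
    hk1.mul_bdd (by fun_prop) (ae_of_all _ fun s => (norm_eq_abs _).trans_le (abs_cos_le_one _))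
  have hint_p : Integrable fun s => p s * (1 - cos (x * s)) / x ^ 2 := by
    rw [← integrableOn_univ, ← Iic_union_Ioi (a := 0)]
    exact hint_neg.union hint_pos
  have heq : ∫ s, k s * cos (x * s) = ∫ s, p s * (1 - cos (x * s)) / x ^ 2 := by
    rw [← intervalIntegral.integral_Iic_add_Ioi hint_k.integrableOn hint_k.integrableOn,
      ← intervalIntegral.integral_Iic_add_Ioi hint_neg hint_pos, heq_neg, heq_pos]
  exact ⟨⟨hint_k, hint_p, heq⟩,
    fun hsupp => heq ▸ integral_mul_one_sub_cos_pos hx hpos hint_p hsupp⟩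

/-- Proposition 7.4 and relation (7.12) of the paper: the cosine transform of the
kernel `k` built from the Lévy density `p` equals `∫ p(t)(1 − cos xt)/x² dt`, and is
positive if `p > 0` on a set of positive measure. -/
theorem stmt7 (p k : ℝ → ℝ) (hmeas : Measurable p)
    (hpos : ∀ y : ℝ, y ≠ 0 → 0 ≤ p y)
    (hint : Integrable (fun y => y ^ 2 / (1 + y ^ 2) * p y))
    (hintp : ∀ x : ℝ, 0 < x → IntegrableOn (fun y => y * p y) (Set.Ioi x))
    (hintm : ∀ x : ℝ, 0 < x → IntegrableOn (fun y => |y| * p y) (Set.Iio (-x)))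
    (hkp : ∀ x : ℝ, 0 < x → k x = ∫ y in Set.Ioi x, (y - x) * p y)
    (hkm : ∀ x : ℝ, x < 0 → k x = ∫ y in Set.Iio x, (x - y) * p y)
    (hk1 : Integrable k) :
    ∀ x : ℝ, x ≠ 0 →
      (Integrable (fun s => k s * Real.cos (x * s)) ∧
       Integrable (fun s => p s * (1 - Real.cos (x * s)) / x ^ 2) ∧
       (∫ s : ℝ, k s * Real.cos (x * s))
         = ∫ s : ℝ, p s * (1 - Real.cos (x * s)) / x ^ 2) ∧
      (0 < volume {y : ℝ | 0 < p y} →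
        0 < ∫ s : ℝ, k s * Real.cos (x * s)) :=
  stmt7_general p k hmeas hpos hintp hintm hkp hkm hk1
end

section
/- Let m ∈ ℕ, let c₀, c₁, …, c_m ∈ ℂ, and let ν₁, …, ν_m be distinct nonzero real numbers. Suppose that for every t ∈ ℝ the value Q(t) = c₀ + Σ_{k=1}^{m} c_k e^{i ν_k t} is a nonnegative real number. Then c₀ is real with c₀ ≥ 0, and |c_k| ≤ c₀ for every k = 1, …, m. In particular, if c₀ = 0 then c_k = 0 for all k. -/
/-!
Take Bohr mean values `lim (1/T) ∫₀ᵀ`. The mean of `e^{iξt}` is `1` if `ξ = 0` and `0`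
otherwise, so the mean of `Q` is `c₀` and the mean of `Q(t) e^{-iν_k t}` is `c_k`
(this is where distinct, nonzero frequencies enter). Since `Q` is real and nonnegative, its
mean `c₀` is real and nonnegative, and `|c_k|` is at most the mean of `|Q(t) e^{-iν_k t}| = Q(t)`,
which is `c₀`.
-/

open Complex Filter Topology

def HasMeanValue {E : Type*} [NormedAddCommGroup E] [NormedSpace ℝ E] (f : ℝ → E) (a : E) :
    Prop :=
  Tendsto (fun T : ℝ => T⁻¹ • ∫ t in (0 : ℝ)..T, f t) atTop (𝓝 a)

namespace HasMeanValue

variable {E : Type*} [NormedAddCommGroup E] [NormedSpace ℝ E] {f g : ℝ → E} {a b : E}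

theorem const [CompleteSpace E] (a : E) : HasMeanValue (fun _ => a) a := by
  refine tendsto_const_nhds.congr' ?_
  filter_upwards [eventually_ne_atTop 0] with T hT
  rw [intervalIntegral.integral_const, sub_zero, smul_smul, inv_mul_cancel₀ hT, one_smul]

theorem add (hf : HasMeanValue f a) (hg : HasMeanValue g b) (hf_cont : Continuous f)
    (hg_cont : Continuous g) : HasMeanValue (fun t => f t + g t) (a + b) := by
  refine (Tendsto.add hf hg).congr fun T => ?_
  rw [intervalIntegral.integral_add (hf_cont.intervalIntegrable _ _)
    (hg_cont.intervalIntegrable _ _), smul_add]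

theorem sum {ι : Type*} (s : Finset ι) {f : ι → ℝ → E} {a : ι → E}
    (hf : ∀ i ∈ s, HasMeanValue (f i) (a i)) (hf_cont : ∀ i ∈ s, Continuous (f i)) :
    HasMeanValue (fun t => ∑ i ∈ s, f i t) (∑ i ∈ s, a i) := by
  refine (tendsto_finsetSum s hf).congr fun T => ?_
  rw [intervalIntegral.integral_finsetSum fun i hi => (hf_cont i hi).intervalIntegrable _ _,
    Finset.smul_sum]

theorem const_mul {f : ℝ → ℂ} {a : ℂ} (hf : HasMeanValue f a) (c : ℂ) :
    HasMeanValue (fun t => c * f t) (c * a) := by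
  refine (Tendsto.const_mul c hf).congr fun T => ?_
  rw [intervalIntegral.integral_const_mul, mul_smul_comm]

theorem norm_le {g : ℝ → ℝ} {b : ℝ} (hf : HasMeanValue f a) (hg : HasMeanValue g b)
    (hg_cont : Continuous g) (hfg : ∀ t, ‖f t‖ ≤ g t) : ‖a‖ ≤ b := by
  refine le_of_tendsto_of_tendsto hf.norm hg ?_
  filter_upwards [eventually_ge_atTop 0] with T hT
  rw [norm_smul, Real.norm_of_nonneg (inv_nonneg.mpr hT), smul_eq_mul]
  exact mul_le_mul_of_nonneg_left (intervalIntegral.norm_integral_le_of_norm_le hT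
    (MeasureTheory.ae_of_all _ fun t _ => hfg t) (hg_cont.intervalIntegrable _ _))
    (inv_nonneg.mpr hT)

theorem nonneg {g : ℝ → ℝ} {b : ℝ} (hg : HasMeanValue g b) (hg_cont : Continuous g)
    (hg_nonneg : ∀ t, 0 ≤ g t) : 0 ≤ b := by
  simpa using (const (0 : ℝ)).norm_le hg hg_cont (by simpa using hg_nonneg)

theorem of_ofReal {g : ℝ → ℝ} {a : ℂ} (hg : HasMeanValue (fun t => (g t : ℂ)) a) :
    a.im = 0 ∧ HasMeanValue g a.re := by
  have hlim : Tendsto (fun T : ℝ => ((T⁻¹ • ∫ t in (0 : ℝ)..T, g t : ℝ) : ℂ)) atTop (𝓝 a) :=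
    hg.congr fun T => by
      rw [intervalIntegral.integral_ofReal, real_smul, smul_eq_mul, ofReal_mul]
  have him := (continuous_im.tendsto a).comp hlim
  have hre := (continuous_re.tendsto a).comp hlim
  simp only [Function.comp_def, ofReal_im, ofReal_re] at him hre
  exact ⟨(tendsto_nhds_unique tendsto_const_nhds him).symm, hre⟩

end HasMeanValue

theorem hasMeanValue_exp_mul_I (ξ : ℝ) :
    HasMeanValue (fun t : ℝ => exp (I * ξ * t)) (if ξ = 0 then 1 else 0) := by
  split_ifs with hξ
  · simpa [hξ] using HasMeanValue.const (1 : ℂ)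
  have hIξ : I * ξ ≠ 0 := mul_ne_zero I_ne_zero (ofReal_ne_zero.mpr hξ)
  have hbound : ∀ T : ℝ, ‖∫ t in (0 : ℝ)..T, exp (I * ξ * t)‖ ≤ 2 / |ξ| := by
    intro T
    rw [integral_exp_mul_complex hIξ, norm_div, norm_mul, norm_I, one_mul, norm_real,
      Real.norm_eq_abs]
    gcongr
    refine (norm_sub_le _ _).trans ?_
    norm_num [norm_exp]
  exact tendsto_inv_atTop_zero.zero_smul_isBoundedUnder_le
    ⟨2 / |ξ|, eventually_map.mpr (Eventually.of_forall hbound)⟩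

theorem hasMeanValue_trigPoly_mul_exp_neg {ι : Type*} (a₀ : ℂ) (s : Finset ι) (a : ι → ℂ)
    (μ : ι → ℝ) (ξ : ℝ) :
    HasMeanValue (fun t : ℝ => (a₀ + ∑ j ∈ s, a j * exp (I * μ j * t)) * exp (-(I * ξ * t)))
      ((if ξ = 0 then a₀ else 0) + ∑ j ∈ s with μ j = ξ, a j) := by
  have hexpand : ∀ t : ℝ, (a₀ + ∑ j ∈ s, a j * exp (I * μ j * t)) * exp (-(I * ξ * t)) =
      a₀ * exp (I * ↑(-ξ) * t) + ∑ j ∈ s, a j * exp (I * ↑(μ j - ξ) * t) := by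
    intro t
    simp only [add_mul, Finset.sum_mul, mul_assoc, ← exp_add]
    push_cast
    ring_nf
  have hmean := ((hasMeanValue_exp_mul_I (-ξ)).const_mul a₀).add
    (HasMeanValue.sum s (fun j _ => (hasMeanValue_exp_mul_I (μ j - ξ)).const_mul (a j))
      (fun _ _ => by fun_prop)) (by fun_prop) (by fun_prop)
  convert hmean using 1
  · exact funext hexpand
  · simp [Finset.sum_filter, sub_eq_zero]

/-- The almost-periodicity lemma (relations (9.24)–(9.25), (9.44)–(9.45) of the
paper): if the trigonometric polynomial `Q(t) = c₀ + Σ c_k e^{iν_k t}` with distinct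
nonzero real frequencies takes nonnegative real values for all real `t`, then `c₀`
is real nonnegative and `|c_k| ≤ c₀`; in particular `c₀ = 0` forces all `c_k = 0`. -/
theorem stmt11 (m : ℕ) (c₀ : ℂ) (c : Fin m → ℂ) (ν : Fin m → ℝ)
    (hν0 : ∀ k, ν k ≠ 0) (hνinj : Function.Injective ν)
    (hQ : ∀ t : ℝ,
      (c₀ + ∑ k, c k * Complex.exp (Complex.I * (ν k) * t)).im = 0 ∧
      0 ≤ (c₀ + ∑ k, c k * Complex.exp (Complex.I * (ν k) * t)).re) :
    c₀.im = 0 ∧ 0 ≤ c₀.re ∧ (∀ k, ‖c k‖ ≤ c₀.re) ∧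
      (c₀ = 0 → ∀ k, c k = 0) := by
  set Q : ℝ → ℂ := fun t => c₀ + ∑ k, c k * exp (I * ν k * t)
  have hQ_real : (fun t => ((Q t).re : ℂ)) = Q := funext fun t => ext rfl (hQ t).1.symm
  have hQ_cont : Continuous fun t => (Q t).re := by fun_prop
  have hmean : HasMeanValue Q c₀ := by
    simpa [hν0] using hasMeanValue_trigPoly_mul_exp_neg c₀ Finset.univ c ν 0
  obtain ⟨him, hre⟩ := HasMeanValue.of_ofReal (hQ_real ▸ hmean)
  have hk : ∀ k, ‖c k‖ ≤ c₀.re := by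
    intro k
    have hcoeff : HasMeanValue (fun t => Q t * exp (-(I * ν k * t))) (c k) := by
      simpa [hν0 k, hνinj.eq_iff, Finset.filter_eq'] using
        hasMeanValue_trigPoly_mul_exp_neg c₀ Finset.univ c ν (ν k)
    refine hcoeff.norm_le hre hQ_cont fun t => ?_
    have hunit : ‖exp (-(I * ν k * t))‖ = 1 := by simp [norm_exp]
    rw [norm_mul, hunit, mul_one, ← congrFun hQ_real t, norm_real, ofReal_re,
      Real.norm_of_nonneg (hQ t).2]
  refine ⟨him, hre.nonneg hQ_cont fun t => (hQ t).2, hk, fun h0 k => ?_⟩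
  exact norm_le_zero_iff.mp (by simpa [h0] using hk k)
end

section
/- Let a > 0 and 1 < α < 2, and define, for x, y ∈ [−a,a], Φ_α(x,y) = ( cos(πα/2) / ((2a)^{α−1} Γ(α)) ) · ( [a(|x−y| + y − x)]^{α−1} − (a−x)^{α−1} (a+y)^{α−1} ). Then Φ_α(x,y) ≥ 0 for all x, y ∈ [−a,a], and Φ_α(x,y) = 0 whenever x ∈ {−a, a} or y ∈ {−a, a}. -/
/-!
Since `|x - y| + y - x = 2 (y - x)⁺`, the key is the identity
`(a - x)(a + y) = 2a (y - x) + (a + x)(a - y)`: on `[-a, a]²` it gives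
`a (|x - y| + y - x) ≤ (a - x)(a + y)`, with equality when `x = -a` or `y = a`, while both sides
vanish when `x = a` or `y = -a`. Raising to the power `α - 1 > 0` preserves all of this, and the
prefactor is `≤ 0` because `cos (π α / 2) < 0` for `1 < α < 3`.
-/

open Real Set

lemma cos_pi_mul_div_two_neg {α : ℝ} (hα1 : 1 < α) (hα3 : α < 3) : cos (π * α / 2) < 0 :=
  cos_neg_of_pi_div_two_lt_of_lt (by nlinarith [pi_pos]) (by nlinarith [pi_pos])

section Bracket

variable {a x y : ℝ}

lemma mul_abs_sub_add_sub_nonneg (ha : 0 ≤ a) : 0 ≤ a * (|x - y| + y - x) :=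
  mul_nonneg ha (by linarith [le_abs_self (x - y)])

lemma mul_abs_sub_add_sub_le (hx : x ∈ Icc (-a) a) (hy : y ∈ Icc (-a) a) :
    a * (|x - y| + y - x) ≤ (a - x) * (a + y) := by
  obtain ⟨hx₁, hx₂⟩ := hx
  obtain ⟨hy₁, hy₂⟩ := hy
  rcases abs_cases (x - y) with ⟨h, hxy⟩ | ⟨h, hxy⟩ <;> rw [h] <;> nlinarith

/-- The bracket of the kernel `Φ_α`, with exponent `p = α - 1`. -/
noncomputable def kernelBracket (a p x y : ℝ) : ℝ :=
  (a * (|x - y| + y - x)) ^ p - (a - x) ^ p * (a + y) ^ p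

variable {p : ℝ}

lemma kernelBracket_nonpos (hp : 0 ≤ p) (hx : x ∈ Icc (-a) a) (hy : y ∈ Icc (-a) a) :
    kernelBracket a p x y ≤ 0 := by
  have ha : 0 ≤ a := by linarith [hx.1, hx.2]
  rw [kernelBracket, sub_nonpos, ← mul_rpow (by linarith [hx.2]) (by linarith [hy.1])]
  exact rpow_le_rpow (mul_abs_sub_add_sub_nonneg ha) (mul_abs_sub_add_sub_le hx hy) hp

lemma kernelBracket_eq_zero (hp : p ≠ 0) (hx : x ∈ Icc (-a) a) (hy : y ∈ Icc (-a) a)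
    (hbd : x = -a ∨ x = a ∨ y = -a ∨ y = a) : kernelBracket a p x y = 0 := by
  obtain ⟨hx₁, hx₂⟩ := hx
  obtain ⟨hy₁, hy₂⟩ := hy
  rw [kernelBracket, sub_eq_zero]
  rcases hbd with h | h | h | h
  · subst x
    rw [abs_of_nonpos (by linarith), show a * (-(-a - y) + y - -a) = (a - -a) * (a + y) by ring,
      mul_rpow (by linarith) (by linarith)]
  · subst x
    rw [abs_of_nonneg (by linarith), sub_self, zero_rpow hp, zero_mul,
      show a * (a - y + y - a) = 0 by ring, zero_rpow hp]
  · subst y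
    rw [abs_of_nonneg (by linarith), add_neg_cancel, zero_rpow hp, mul_zero,
      show a * (x - -a + -a - x) = 0 by ring, zero_rpow hp]
  · subst y
    rw [abs_of_nonpos (by linarith), show a * (-(x - a) + a - x) = (a - x) * (a + a) by ring,
      mul_rpow (by linarith) (by linarith)]

end Bracket

theorem stmt13_general (a α : ℝ) (hα1 : 1 < α) (hα2 : α < 2)
    (Φ : ℝ → ℝ → ℝ)
    (hΦ : ∀ x y : ℝ, Φ x y =
      (Real.cos (Real.pi * α / 2) / ((2*a) ^ (α - 1) * Real.Gamma α)) *
        ((a * (|x - y| + y - x)) ^ (α - 1)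
          - (a - x) ^ (α - 1) * (a + y) ^ (α - 1))) :
    (∀ x ∈ Set.Icc (-a) a, ∀ y ∈ Set.Icc (-a) a, 0 ≤ Φ x y) ∧
    (∀ x ∈ Set.Icc (-a) a, ∀ y ∈ Set.Icc (-a) a,
      (x = -a ∨ x = a ∨ y = -a ∨ y = a) → Φ x y = 0) := by
  have hp : 0 < α - 1 := by linarith
  refine ⟨fun x hx y hy => ?_, fun x hx y hy hbd => ?_⟩
  · have ha : 0 ≤ a := by linarith [hx.1, hx.2]
    have hcoeff : cos (π * α / 2) / ((2 * a) ^ (α - 1) * Gamma α) ≤ 0 :=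
      div_nonpos_of_nonpos_of_nonneg (cos_pi_mul_div_two_neg hα1 (by linarith)).le
        (mul_nonneg (rpow_nonneg (by linarith) _) (Gamma_pos_of_pos (by linarith)).le)
    rw [hΦ]
    exact mul_nonneg_of_nonpos_of_nonpos hcoeff (kernelBracket_nonpos hp.le hx hy)
  · rw [hΦ]
    exact mul_eq_zero_of_right _ (kernelBracket_eq_zero hp.ne' hx hy hbd)

/-- Formula (11.6) of the paper: the quasi-potential kernel of the completely
asymmetric stable process (`1 < α < 2`, `β = 1`) on `[−a,a]` is nonnegative and
vanishes on the boundary. -/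
theorem stmt13 (a α : ℝ) (ha : 0 < a) (hα1 : 1 < α) (hα2 : α < 2)
    (Φ : ℝ → ℝ → ℝ)
    (hΦ : ∀ x y : ℝ, Φ x y =
      (Real.cos (Real.pi * α / 2) / ((2*a) ^ (α - 1) * Real.Gamma α)) *
        ((a * (|x - y| + y - x)) ^ (α - 1)
          - (a - x) ^ (α - 1) * (a + y) ^ (α - 1))) :
    (∀ x ∈ Set.Icc (-a) a, ∀ y ∈ Set.Icc (-a) a, 0 ≤ Φ x y) ∧
    (∀ x ∈ Set.Icc (-a) a, ∀ y ∈ Set.Icc (-a) a,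
      (x = -a ∨ x = a ∨ y = -a ∨ y = a) → Φ x y = 0) :=
  stmt13_general a α hα1 hα2 Φ hΦ
end

section
/- Let a > 0, b > 0 and define S(t) = Σ_{m=0}^{∞} (4/((2m+1)π)) sin( (2m+1)πb/(a+b) ) exp( −(t/2) ((2m+1)π/(a+b))² ) for t > 0. Then S(t) · exp( t π² / (2(a+b)²) ) → (4/π) sin( πa/(a+b) ) as t → ∞; equivalently, S(t) = (4/π) sin( πa/(a+b) ) e^{− t π² / (2(a+b)²)} (1 + o(1)) as t → ∞. -/
open Real Filter Topology

/-!
Multiplying by `exp (t π² / (2(a+b)²))` turns `S t` into the Dirichlet series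
`∑ cₘ exp (-t λₘ)` with `λₘ = π² ((2m+1)² - 1) / (2(a+b)²)`. The gap `λ₀ = 0 < λₘ` for `m ≥ 1`
kills every term but the first as `t → ∞`, and the bound `|cₘ e^{-t λₘ}| ≤ (4/π) e^{-λₘ}`
for `t ≥ 1` lets dominated convergence pass the limit through the sum; since
`sin (π b/(a+b)) = sin (π a/(a+b))`, the surviving term is `(4/π) sin (π a/(a+b))`.
-/

theorem tendsto_tsum_mul_exp_neg_mul_atTop {ι : Type*} {c r : ι → ℝ} {C : ℝ} (i₀ : ι)
    (hc : ∀ i, |c i| ≤ C) (hr₀ : r i₀ = 0) (hr : ∀ i ≠ i₀, 0 < r i)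
    (hsum : Summable fun i => exp (-r i)) :
    Tendsto (fun t => ∑' i, c i * exp (-(t * r i))) atTop (𝓝 (c i₀)) := by
  classical
  have hr_nonneg : ∀ i, 0 ≤ r i := fun i => by
    rcases eq_or_ne i i₀ with rfl | hi
    · exact hr₀.ge
    · exact (hr i hi).le
  rw [← tsum_pi_single i₀ (c i₀)]
  refine tendsto_tsum_of_dominated_convergence (hsum.mul_left C) (fun i => ?_) ?_
  · rcases eq_or_ne i i₀ with rfl | hi
    · simp [hr₀]
    · rw [Pi.single_eq_of_ne hi, ← mul_zero (c i)]
      refine tendsto_const_nhds.mul (tendsto_exp_atBot.comp ?_)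
      exact tendsto_neg_atTop_atBot.comp (tendsto_id.atTop_mul_const (hr i hi))
  · filter_upwards [eventually_ge_atTop 1] with t ht i
    rw [norm_mul, norm_eq_abs, norm_of_nonneg (exp_pos _).le]
    refine mul_le_mul (hc i) (exp_le_exp.mpr ?_) (exp_pos _).le ((abs_nonneg _).trans (hc i))
    nlinarith [hr_nonneg i]

lemma summable_exp_neg_mul_odd_sq_sub_one {K : ℝ} (hK : 0 < K) :
    Summable fun m : ℕ => exp (-(K * ((2 * (m : ℝ) + 1) ^ 2 - 1))) := by
  refine Summable.of_nonneg_of_le (fun m => (exp_pos _).le) (fun m => ?_)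
    (summable_geometric_of_lt_one (exp_pos (-(4 * K))).le (exp_lt_one_iff.mpr (by linarith)))
  rw [← exp_nat_mul, exp_le_exp]
  have hm : (0 : ℝ) ≤ m := m.cast_nonneg
  nlinarith [mul_nonneg hK.le (mul_nonneg hm hm)]

lemma abs_div_odd_mul_pi_mul_sin_le (m : ℕ) (x : ℝ) :
    |4 / ((2 * (m : ℝ) + 1) * π) * sin x| ≤ 4 / π := by
  have hodd : (1 : ℝ) ≤ 2 * m + 1 := by linarith [m.cast_nonneg (α := ℝ)]
  calc |4 / ((2 * (m : ℝ) + 1) * π) * sin x|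
      = 4 / ((2 * (m : ℝ) + 1) * π) * |sin x| := by
        rw [abs_mul, abs_of_pos (by positivity)]
    _ ≤ 4 / (1 * π) * 1 := by
        gcongr
        exact abs_sin_le_one x
    _ = 4 / π := by ring

lemma sin_pi_mul_div_add_comm (a b : ℝ) (hab : a + b ≠ 0) :
    sin (π * b / (a + b)) = sin (π * a / (a + b)) := by
  rw [← sin_pi_sub]
  congr 1
  field_simp
  ring

lemma exp_odd_mode_mul_exp_ground_mode (a b t : ℝ) (hab : a + b ≠ 0) (m : ℕ) :
    exp (-(t / 2) * ((2 * (m : ℝ) + 1) * π / (a + b)) ^ 2) * exp (t * π ^ 2 / (2 * (a + b) ^ 2))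
      = exp (-(t * (π ^ 2 / (2 * (a + b) ^ 2) * ((2 * (m : ℝ) + 1) ^ 2 - 1)))) := by
  rw [← exp_add]
  congr 1
  field_simp
  ring

/-- Proposition 13.2 of the paper: long-time asymptotics of the series (13.7),
`S(t) = (4/π) sin(πa/(a+b)) e^{−tπ²/(2(a+b)²)} (1+o(1))` as `t → ∞`. -/
theorem stmt18 (a b : ℝ) (ha : 0 < a) (hb : 0 < b)
    (S : ℝ → ℝ)
    (hS : ∀ t : ℝ, S t = ∑' m : ℕ,
      (4 / ((2*(m:ℝ)+1) * Real.pi)) * Real.sin ((2*(m:ℝ)+1) * Real.pi * b / (a+b)) *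
        Real.exp (-(t/2) * ((2*(m:ℝ)+1) * Real.pi / (a+b))^2)) :
    Tendsto (fun t => S t * Real.exp (t * Real.pi^2 / (2*(a+b)^2))) atTop
      (nhds ((4/Real.pi) * Real.sin (Real.pi * a / (a+b)))) := by
  have hab : a + b ≠ 0 := by positivity
  set K := π ^ 2 / (2 * (a + b) ^ 2)
  have hK : 0 < K := by positivity
  have hlim := tendsto_tsum_mul_exp_neg_mul_atTop (C := 4 / π)
    (c := fun m : ℕ => 4 / ((2 * (m : ℝ) + 1) * π) * sin ((2 * (m : ℝ) + 1) * π * b / (a + b)))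
    (r := fun m : ℕ => K * ((2 * (m : ℝ) + 1) ^ 2 - 1)) 0
    (fun m => abs_div_odd_mul_pi_mul_sin_le m _) (by simp)
    (fun m hm => mul_pos hK (by
      have : (1 : ℝ) ≤ m := by exact_mod_cast Nat.one_le_iff_ne_zero.mpr hm
      nlinarith))
    (summable_exp_neg_mul_odd_sq_sub_one hK)
  simp only [Nat.cast_zero, mul_zero, zero_add, one_mul, sin_pi_mul_div_add_comm a b hab] at hlim
  refine hlim.congr fun t => ?_
  rw [hS t, ← tsum_mul_right]
  simp only [mul_assoc, exp_odd_mode_mul_exp_ground_mode a b t hab, K]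
end
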